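/- arXiv:1912.02541 — 2 statements merged into one kernel-verified Lean document; each statement's English description precedes it below -/
import Mathlib

section
/- The map (a_1,…,a_n, b_1,…,b_n) ↦ (α_1,…,α_{2n}, β_1,…,β_{n+1}) defined by β_{n+1} = max(c⁺, c⁺ − 2Σb_i, κ), β_i = 2Σ_{j=i}^n b_j + β_{n+1}, and α_{2i-1} = (−2a_i − c⁺ + β)/2, α_{2i} = (2a_i + c⁺ + β)/2 (with β = β_i if b_i ≥ 0, β = β_{i+1} otherwise), where κ = max_{1≤k≤n}[2·max(b_k,0) + |2a_k + c⁺| − 2Σ_{j=k}^n b_j], satisfies: recovering a_i = (α_{2i} − α_{2i-1} − c⁺)/2 and b_i = (β_i − β_{i+1})/2 for all i. In particular the map is injective. -/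
/-! Consecutive suffix sums differ by one term, so `β i - β (i + 1) = 2 * b i`.
The two `α`-entries of the `i`-th puncture are `(∓(2 * a i + c⁺) + β) / 2` for one and the same `β`;
their numerators differ by the even number `2 * (2 * a i + c⁺)`, so both floor divisions round the
same way and their difference is exactly `2 * a i + c⁺`, whichever `β` was used. -/

namespace Dynnikov

lemma eq_ediv_two_of_alpha_pair {a c B α₁ α₂ : ℤ} (h₁ : α₁ = (-(2 * a) - c + B) / 2)
    (h₂ : α₂ = (2 * a + c + B) / 2) : a = (α₂ - α₁ - c) / 2 := by
  omega

lemma sub_succ_eq_two_mul_of_eq_suffix_sum {n : ℕ} {b β : ℕ → ℤ} {βN : ℤ}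
    (hβ : ∀ i, 1 ≤ i → i ≤ n + 1 → β i = 2 * ∑ j ∈ Finset.Icc i n, b j + βN)
    {i : ℕ} (hi : 1 ≤ i) (hin : i ≤ n) : β i - β (i + 1) = 2 * b i := by
  rw [hβ i hi (by omega), hβ (i + 1) (by omega) (by omega),
    ← Finset.insert_Icc_add_one_left_eq_Icc hin, Finset.sum_insert (by simp)]
  ring

lemma recover_of_alpha_beta {n : ℕ} {cplus : ℤ} {a b : ℕ → ℤ} {βN : ℤ} {α β : ℕ → ℤ}
    (hβ : ∀ i, 1 ≤ i → i ≤ n + 1 → β i = 2 * ∑ j ∈ Finset.Icc i n, b j + βN)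
    (hα : ∀ i, 1 ≤ i → i ≤ n →
      (0 ≤ b i → α (2 * i - 1) = (-(2 * a i) - cplus + β i) / 2 ∧
                 α (2 * i) = (2 * a i + cplus + β i) / 2) ∧
      (b i < 0 → α (2 * i - 1) = (-(2 * a i) - cplus + β (i + 1)) / 2 ∧
                 α (2 * i) = (2 * a i + cplus + β (i + 1)) / 2))
    {i : ℕ} (hi : 1 ≤ i) (hin : i ≤ n) :
    a i = (α (2 * i) - α (2 * i - 1) - cplus) / 2 ∧ b i = (β i - β (i + 1)) / 2 := by
  have hb : b i = (β i - β (i + 1)) / 2 := by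
    rw [sub_succ_eq_two_mul_of_eq_suffix_sum hβ hi hin]
    omega
  obtain ⟨hnonneg, hneg⟩ := hα i hi hin
  rcases le_or_gt 0 (b i) with hbi | hbi
  · obtain ⟨h₁, h₂⟩ := hnonneg hbi
    exact ⟨eq_ediv_two_of_alpha_pair h₁ h₂, hb⟩
  · obtain ⟨h₁, h₂⟩ := hneg hbi
    exact ⟨eq_ediv_two_of_alpha_pair h₁ h₂, hb⟩

end Dynnikov

open Dynnikov in
theorem dynnikov_alpha_beta_inversion_recovers_general (n : ℕ) (cplus : ℤ)
    (a b a' b' : ℕ → ℤ) (βN βN' : ℤ) (α α' β β' : ℕ → ℤ)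
    (hβ : ∀ i, 1 ≤ i → i ≤ n + 1 → β i = 2 * ∑ j ∈ Finset.Icc i n, b j + βN)
    (hβ' : ∀ i, 1 ≤ i → i ≤ n + 1 → β' i = 2 * ∑ j ∈ Finset.Icc i n, b' j + βN')
    (hα : ∀ i, 1 ≤ i → i ≤ n →
      (0 ≤ b i → α (2 * i - 1) = (-(2 * a i) - cplus + β i) / 2 ∧
                 α (2 * i) = (2 * a i + cplus + β i) / 2) ∧
      (b i < 0 → α (2 * i - 1) = (-(2 * a i) - cplus + β (i + 1)) / 2 ∧
                 α (2 * i) = (2 * a i + cplus + β (i + 1)) / 2))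
    (hα' : ∀ i, 1 ≤ i → i ≤ n →
      (0 ≤ b' i → α' (2 * i - 1) = (-(2 * a' i) - cplus + β' i) / 2 ∧
                  α' (2 * i) = (2 * a' i + cplus + β' i) / 2) ∧
      (b' i < 0 → α' (2 * i - 1) = (-(2 * a' i) - cplus + β' (i + 1)) / 2 ∧
                  α' (2 * i) = (2 * a' i + cplus + β' (i + 1)) / 2)) :
    (∀ i, 1 ≤ i → i ≤ n →
      a i = (α (2 * i) - α (2 * i - 1) - cplus) / 2 ∧ b i = (β i - β (i + 1)) / 2) ∧
    ((∀ i, 1 ≤ i → i ≤ 2 * n → α i = α' i) → (∀ i, 1 ≤ i → i ≤ n + 1 → β i = β' i) →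
      ∀ i, 1 ≤ i → i ≤ n → a i = a' i ∧ b i = b' i) := by
  refine ⟨fun i hi hin => recover_of_alpha_beta hβ hα hi hin, fun hαα' hββ' i hi hin => ?_⟩
  obtain ⟨ha, hb⟩ := recover_of_alpha_beta hβ hα hi hin
  obtain ⟨ha', hb'⟩ := recover_of_alpha_beta hβ' hα' hi hin
  rw [ha, ha', hb, hb', hαα' (2 * i) (by omega) (by omega), hαα' (2 * i - 1) (by omega) (by omega),
    hββ' i hi (by omega), hββ' (i + 1) (by omega) (by omega)]
  exact ⟨rfl, rfl⟩

/-- The inversion formulas for the (α, β) part of the Dynnikov coordinates on the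
punctured torus recover the coordinates (a, b); in particular the map
(a, b) ↦ (α, β) is injective. -/
theorem dynnikov_alpha_beta_inversion_recovers (n : ℕ) (hn : 2 ≤ n) (cplus : ℤ)
    (hc : 0 ≤ cplus)
    (a b a' b' : ℕ → ℤ) (κ κ' βN βN' : ℤ) (α α' β β' : ℕ → ℤ)
    (hne : (Finset.Icc 1 n).Nonempty)
    (hκ : κ = (Finset.Icc 1 n).sup' hne
      (fun k => 2 * max (b k) 0 + |2 * a k + cplus| - 2 * ∑ j ∈ Finset.Icc k n, b j))
    (hκ' : κ' = (Finset.Icc 1 n).sup' hne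
      (fun k => 2 * max (b' k) 0 + |2 * a' k + cplus| - 2 * ∑ j ∈ Finset.Icc k n, b' j))
    (hβN : βN = max cplus (max (cplus - 2 * ∑ i ∈ Finset.Icc 1 n, b i) κ))
    (hβN' : βN' = max cplus (max (cplus - 2 * ∑ i ∈ Finset.Icc 1 n, b' i) κ'))
    (hβ : ∀ i, 1 ≤ i → i ≤ n + 1 → β i = 2 * ∑ j ∈ Finset.Icc i n, b j + βN)
    (hβ' : ∀ i, 1 ≤ i → i ≤ n + 1 → β' i = 2 * ∑ j ∈ Finset.Icc i n, b' j + βN')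
    (hα : ∀ i, 1 ≤ i → i ≤ n →
      (0 ≤ b i → α (2 * i - 1) = (-(2 * a i) - cplus + β i) / 2 ∧
                 α (2 * i) = (2 * a i + cplus + β i) / 2) ∧
      (b i < 0 → α (2 * i - 1) = (-(2 * a i) - cplus + β (i + 1)) / 2 ∧
                 α (2 * i) = (2 * a i + cplus + β (i + 1)) / 2))
    (hα' : ∀ i, 1 ≤ i → i ≤ n →
      (0 ≤ b' i → α' (2 * i - 1) = (-(2 * a' i) - cplus + β' i) / 2 ∧
                  α' (2 * i) = (2 * a' i + cplus + β' i) / 2) ∧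
      (b' i < 0 → α' (2 * i - 1) = (-(2 * a' i) - cplus + β' (i + 1)) / 2 ∧
                  α' (2 * i) = (2 * a' i + cplus + β' (i + 1)) / 2)) :
    (∀ i, 1 ≤ i → i ≤ n →
      a i = (α (2 * i) - α (2 * i - 1) - cplus) / 2 ∧ b i = (β i - β (i + 1)) / 2) ∧
    ((∀ i, 1 ≤ i → i ≤ 2 * n → α i = α' i) → (∀ i, 1 ≤ i → i ≤ n + 1 → β i = β' i) →
      ∀ i, 1 ≤ i → i ≤ n → a i = a' i ∧ b i = b' i) :=
  dynnikov_alpha_beta_inversion_recovers_general n cplus a b a' b' βN βN' α α' β β' hβ hβ' hα hα'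
end

section
/- With β_{n+1} = max(c⁺, c⁺ − 2Σ_{i=1}^n b_i, κ) where κ = max_{1≤k≤n}[2·max(b_k,0) + |2a_k + c⁺| − 2Σ_{j=k}^n b_j], all intersection numbers β_i = 2Σ_{j=i}^n b_j + β_{n+1} are nonnegative, and moreover α_{2i-1} = (−2a_i − c⁺ + β)/2 and α_{2i} = (2a_i + c⁺ + β)/2 (β = β_i if b_i ≥ 0, else β = β_{i+1}) are nonnegative. -/
/-!
Every term of the maximum `κ` is at most `β_{n+1}`, so for `1 ≤ i ≤ n` the number
`β_i = 2 ∑_{j ≥ i} b_j + β_{n+1}` dominates `2 max(b_i, 0) + |2a_i + c⁺|`, and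
`β_{i+1} = β_i - 2 b_i` dominates `2 max(-b_i, 0) + |2a_i + c⁺|`. Hence both `β_i` and
`β_{i+1}` are at least `|2a_i + c⁺|`, which gives the nonnegativity of every `β_j` and of both
numerators `∓(2a_i + c⁺) + β` in the formulas for `α`.
-/

lemma Int.ediv_two_nonneg_of_abs_le {x B : ℤ} (h : |x| ≤ B) :
    0 ≤ (-x + B) / 2 ∧ 0 ≤ (x + B) / 2 :=
  ⟨Int.ediv_nonneg (by linarith [le_abs_self x]) zero_le_two,
    Int.ediv_nonneg (by linarith [neg_le_abs x]) zero_le_two⟩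

section IntersectionNumbers

variable {n : ℕ} {b x : ℕ → ℤ} {βN : ℤ} {β : ℕ → ℤ}

lemma succ_eq_sub_of_eq_tail_sum
    (hβ : ∀ i, 1 ≤ i → i ≤ n + 1 → β i = 2 * ∑ j ∈ Finset.Icc i n, b j + βN)
    {i : ℕ} (h1 : 1 ≤ i) (h2 : i ≤ n) : β (i + 1) = β i - 2 * b i := by
  rw [hβ i h1 (by omega), hβ (i + 1) (by omega) (by omega), ← Finset.add_sum_Ioc_eq_sum_Icc h2,
    ← Finset.Icc_add_one_left_eq_Ioc]
  ring

lemma abs_le_of_eq_tail_sum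
    (hβ : ∀ i, 1 ≤ i → i ≤ n + 1 → β i = 2 * ∑ j ∈ Finset.Icc i n, b j + βN)
    (hκ : ∀ k ∈ Finset.Icc 1 n, 2 * max (b k) 0 + |x k| - 2 * ∑ j ∈ Finset.Icc k n, b j ≤ βN)
    {i : ℕ} (h1 : 1 ≤ i) (h2 : i ≤ n) : |x i| ≤ β i ∧ |x i| ≤ β (i + 1) := by
  have hi : 2 * max (b i) 0 + |x i| ≤ β i := by
    linarith [hκ i (Finset.mem_Icc.mpr ⟨h1, h2⟩), hβ i h1 (by omega)]
  rw [succ_eq_sub_of_eq_tail_sum hβ h1 h2]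
  constructor <;> linarith [le_max_left (b i) 0, le_max_right (b i) 0]

end IntersectionNumbers

theorem dynnikov_inversion_nonneg_general (n : ℕ) (cplus : ℤ)
    (a b : ℕ → ℤ) (κ βN : ℤ) (α β : ℕ → ℤ)
    (hne : (Finset.Icc 1 n).Nonempty)
    (hκ : κ = (Finset.Icc 1 n).sup' hne
      (fun k => 2 * max (b k) 0 + |2 * a k + cplus| - 2 * ∑ j ∈ Finset.Icc k n, b j))
    (hβN : βN = max cplus (max (cplus - 2 * ∑ i ∈ Finset.Icc 1 n, b i) κ))
    (hβ : ∀ i, 1 ≤ i → i ≤ n + 1 → β i = 2 * ∑ j ∈ Finset.Icc i n, b j + βN)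
    (hα : ∀ i, 1 ≤ i → i ≤ n →
      (0 ≤ b i → α (2 * i - 1) = (-(2 * a i) - cplus + β i) / 2 ∧
                 α (2 * i) = (2 * a i + cplus + β i) / 2) ∧
      (b i < 0 → α (2 * i - 1) = (-(2 * a i) - cplus + β (i + 1)) / 2 ∧
                 α (2 * i) = (2 * a i + cplus + β (i + 1)) / 2)) :
    (∀ i, 1 ≤ i → i ≤ n + 1 → 0 ≤ β i) ∧
    (∀ i, 1 ≤ i → i ≤ n → 0 ≤ α (2 * i - 1) ∧ 0 ≤ α (2 * i)) := by
  have hn : 1 ≤ n := Finset.nonempty_Icc.mp hne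
  have hκβN : κ ≤ βN := hβN ▸ le_max_of_le_right (le_max_right _ _)
  have hbound (i : ℕ) (h1 : 1 ≤ i) (h2 : i ≤ n) :
      |2 * a i + cplus| ≤ β i ∧ |2 * a i + cplus| ≤ β (i + 1) :=
    abs_le_of_eq_tail_sum (x := fun k => 2 * a k + cplus) hβ
      (fun k hk => (hκ ▸ Finset.le_sup' _ hk).trans hκβN) h1 h2
  refine ⟨fun i h1 h2 => ?_, fun i h1 h2 => ?_⟩
  · obtain hi | rfl := Nat.lt_or_eq_of_le h2
    · exact (abs_nonneg _).trans (hbound i h1 (by omega)).1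
    · exact (abs_nonneg _).trans (hbound n hn le_rfl).2
  · have hneg : -(2 * a i) - cplus = -(2 * a i + cplus) := by ring
    rcases le_or_gt 0 (b i) with hb | hb
    · obtain ⟨e1, e2⟩ := (hα i h1 h2).1 hb
      rw [e1, e2, hneg]
      exact Int.ediv_two_nonneg_of_abs_le (hbound i h1 h2).1
    · obtain ⟨e1, e2⟩ := (hα i h1 h2).2 hb
      rw [e1, e2, hneg]
      exact Int.ediv_two_nonneg_of_abs_le (hbound i h1 h2).2

/-- Nonnegativity of the intersection numbers produced by the inversion formulas. -/
theorem dynnikov_inversion_nonneg (n : ℕ) (hn : 2 ≤ n) (cplus : ℤ) (hc : 0 ≤ cplus)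
    (a b : ℕ → ℤ) (κ βN : ℤ) (α β : ℕ → ℤ)
    (hne : (Finset.Icc 1 n).Nonempty)
    (hκ : κ = (Finset.Icc 1 n).sup' hne
      (fun k => 2 * max (b k) 0 + |2 * a k + cplus| - 2 * ∑ j ∈ Finset.Icc k n, b j))
    (hβN : βN = max cplus (max (cplus - 2 * ∑ i ∈ Finset.Icc 1 n, b i) κ))
    (hβ : ∀ i, 1 ≤ i → i ≤ n + 1 → β i = 2 * ∑ j ∈ Finset.Icc i n, b j + βN)
    (hα : ∀ i, 1 ≤ i → i ≤ n →
      (0 ≤ b i → α (2 * i - 1) = (-(2 * a i) - cplus + β i) / 2 ∧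
                 α (2 * i) = (2 * a i + cplus + β i) / 2) ∧
      (b i < 0 → α (2 * i - 1) = (-(2 * a i) - cplus + β (i + 1)) / 2 ∧
                 α (2 * i) = (2 * a i + cplus + β (i + 1)) / 2)) :
    (∀ i, 1 ≤ i → i ≤ n + 1 → 0 ≤ β i) ∧
    (∀ i, 1 ≤ i → i ≤ n → 0 ≤ α (2 * i - 1) ∧ 0 ≤ α (2 * i)) :=
  dynnikov_inversion_nonneg_general n cplus a b κ βN α β hne hκ hβN hβ hα
end
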